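/- arXiv:2206.14106 — 2 statements merged into one kernel-verified Lean document; each statement's English description precedes it below -/
import Mathlib

section
/- Let g : ℝ^n → ℝ^m be a smooth (C^∞) map, let M = g⁻¹(0), and let p ∈ M be a point at which the Jacobian dg_p is surjective. Write T_pM = ker(dg_p) and let N_pM be the orthogonal complement of T_pM in ℝ^n with respect to the Euclidean inner product. Then there exist ε > 0, δ > 0 and a smooth map R_p : {v ∈ T_pM : ‖v‖ < ε} → ℝ^n such that for every v with ‖v‖ < ε: (i) R_p(v) ∈ M, and ‖p + v − R_p(v)‖ ≤ ‖p + v − y‖ for every y ∈ M with ‖y − p‖ < δ, with equality only when y = R_p(v) (i.e. R_p(v) is the unique local Euclidean-closest point of M to p + v); (ii) R_p(0) = p; (iii) for every v, the curve c(t) = R_p(tv) satisfies c′(0) = v; and (iv) c″(0) ∈ N_pM (the second-order retraction property). -/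
/-!
A point `x ∈ M = g⁻¹(0)` at which `dg_x` is onto is a critical point of the distance to `z` exactly
when it solves the Lagrange system `x + (dg_x)† μ = z`, `g x = 0`, i.e.
`lagrangeMap g (x, μ) = (z, 0)`. Since `dg_p` is surjective, the derivative
`(dx, dμ) ↦ (dx + (dg_p)† dμ, dg_p dx)` of this map at `(p, 0)` is invertible, so the inverse
function theorem gives a smooth local inverse `Φ⁻¹`; `R v` is the `x`-component of
`Φ⁻¹ (p + v, 0)`. A nearest point of `M` to `p + v` exists by compactness, and every local nearest
point `x` near `p` solves the Lagrange system with the multiplier `(A A†)⁻¹ A (z - x)`, `A = dg_x`,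
which is small because it depends continuously on `(x, z)`; so it is `R v`. Differentiating
`x(t) + (dg_{x(t)})† μ(t) = p + t v` with `μ(0) = 0` and `dg_p x'(0) = 0` gives `μ'(0) = 0` and
`x'(0) = v`, and then `x''(0) = -(dg_p)† μ''(0)`, which is orthogonal to `ker dg_p`.
-/

open ContinuousLinearMap Filter Topology
open scoped ContDiff

lemma ContDiff.exists_openPartialHomeomorph_contDiffAt_symm {𝕂 X Y : Type*} [RCLike 𝕂]
    [NormedAddCommGroup X] [NormedSpace 𝕂 X] [CompleteSpace X]
    [NormedAddCommGroup Y] [NormedSpace 𝕂 Y] [CompleteSpace Y]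
    {f : X → Y} {f' : X →L[𝕂] Y} {a : X} {n : WithTop ℕ∞} (hf : ContDiff 𝕂 n f) (hn : n ≠ 0)
    (hf' : HasFDerivAt f f' a) (hbij : Function.Bijective f') :
    ∃ Φ : OpenPartialHomeomorph X Y, ⇑Φ = f ∧ a ∈ Φ.source ∧
      ∀ w ∈ Φ.target, ContDiffAt 𝕂 n Φ.symm w := by
  let e := ContinuousLinearEquiv.ofBijective f' (LinearMap.ker_eq_bot.mpr hbij.1)
    (LinearMap.range_eq_top.mpr hbij.2)
  have he : HasFDerivAt f (e : X →L[𝕂] Y) a := by rwa [ContinuousLinearEquiv.coe_ofBijective]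
  let Φ₀ := hf.contDiffAt.toOpenPartialHomeomorph f he hn
  -- shrink the source to where `f` has an invertible derivative, so that `Φ.symm` is smooth on
  -- the whole target
  let U := fderiv 𝕂 f ⁻¹' Set.range ((↑) : (X ≃L[𝕂] Y) → X →L[𝕂] Y)
  have hU : IsOpen U := ContinuousLinearEquiv.isOpen.preimage (hf.continuous_fderiv hn)
  refine ⟨Φ₀.restrOpen U hU, rfl, ⟨hf.contDiffAt.mem_toOpenPartialHomeomorph_source he hn,
    e, he.fderiv.symm⟩, fun w hw ↦ ?_⟩
  obtain ⟨e', he'⟩ := ((Φ₀.restrOpen U hU).map_target hw).2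
  exact (Φ₀.restrOpen U hU).contDiffAt_symm hw
    (he' ▸ (hf.differentiable hn _).hasFDerivAt) hf.contDiffAt

lemma IsClosed.unique_nearest_of_unique_isLocalMinOn {E : Type*} [NormedAddCommGroup E]
    [ProperSpace E] {S : Set E} (hS : IsClosed S) {p z y₀ : E} {δ : ℝ} (hp : p ∈ S)
    (hz : 2 * ‖z - p‖ < δ)
    (huniq : ∀ y ∈ S, ‖y - p‖ < δ → IsLocalMinOn (fun x ↦ ‖z - x‖) S y → y = y₀) :
    y₀ ∈ S ∧ ∀ y ∈ S, ‖y - p‖ < δ → ‖z - y₀‖ ≤ ‖z - y‖ ∧ (‖z - y₀‖ = ‖z - y‖ → y = y₀) := by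
  have hδ : 0 ≤ δ := (mul_nonneg zero_le_two (norm_nonneg _)).trans hz.le
  obtain ⟨y₁, ⟨hy₁S, -⟩, hmin⟩ := ((isCompact_closedBall p δ).inter_left hS).exists_isMinOn
    ⟨p, hp, Metric.mem_closedBall_self hδ⟩ (continuous_const.sub continuous_id).norm.continuousOn
  have hloc : ∀ y, ‖y - p‖ < δ → ‖z - y‖ ≤ ‖z - y₁‖ → IsLocalMinOn (‖z - ·‖) S y := by
    intro y hy hle
    filter_upwards [inter_mem_nhdsWithin S (Metric.isOpen_ball.mem_nhds
      (mem_ball_iff_norm.mpr hy))] with x ⟨hxS, hx⟩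
    exact hle.trans (hmin ⟨hxS, Metric.ball_subset_closedBall hx⟩)
  have hy₁z : ‖z - y₁‖ ≤ ‖z - p‖ := hmin ⟨hp, Metric.mem_closedBall_self hδ⟩
  have hy₁p : ‖y₁ - p‖ < δ := by
    have := norm_sub_le_norm_sub_add_norm_sub y₁ z p
    rw [norm_sub_rev y₁ z] at this
    linarith
  obtain rfl := huniq y₁ hy₁S hy₁p (hloc y₁ hy₁p le_rfl)
  exact ⟨hy₁S, fun y hyS hy ↦ ⟨hmin ⟨hyS, mem_closedBall_iff_norm.mpr hy.le⟩,
    fun heq ↦ huniq y hyS hy (hloc y hy heq.ge)⟩⟩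

section Curve

variable {E F : Type*} [NormedAddCommGroup E] [NormedSpace ℝ E]
  [NormedAddCommGroup F] [NormedSpace ℝ F] {K : ℝ → F →L[ℝ] E} {b : ℝ → F} {t : ℝ}

lemma deriv_clm_apply_of_eq_zero (hK : DifferentiableAt ℝ K t) (hb : DifferentiableAt ℝ b t)
    (hb₀ : b t = 0) : deriv (fun s ↦ K s (b s)) t = K t (deriv b t) := by
  rw [deriv_clm_apply hK hb, hb₀, map_zero, zero_add]

lemma deriv_deriv_clm_apply_of_eq_zero (hK : ContDiffAt ℝ 2 K t) (hb : ContDiffAt ℝ 2 b t)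
    (hb₀ : b t = 0) (hb₁ : deriv b t = 0) :
    deriv (deriv fun s ↦ K s (b s)) t = K t (deriv (deriv b) t) := by
  have hK' := (hK.derivWithin (m := 1) (by norm_num)).differentiableAt one_ne_zero
  have hb' := (hb.derivWithin (m := 1) (by norm_num)).differentiableAt one_ne_zero
  have hderiv : deriv (fun s ↦ K s (b s)) =ᶠ[𝓝 t] fun s ↦ deriv K s (b s) + K s (deriv b s) := by
    filter_upwards [hK.eventually (by simp), hb.eventually (by simp)] with s hKs hbs
    exact deriv_clm_apply (hKs.differentiableAt two_ne_zero) (hbs.differentiableAt two_ne_zero)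
  rw [hderiv.deriv_eq, deriv_fun_add (hK'.clm_apply (hb.differentiableAt two_ne_zero))
    ((hK.differentiableAt two_ne_zero).clm_apply hb'), deriv_clm_apply hK'
    (hb.differentiableAt two_ne_zero), deriv_clm_apply (hK.differentiableAt two_ne_zero) hb',
    hb₀, hb₁]
  simp

end Curve

section Lagrange

variable {E F : Type*} [NormedAddCommGroup E] [InnerProductSpace ℝ E] [CompleteSpace E]
  [NormedAddCommGroup F] [InnerProductSpace ℝ F] [CompleteSpace F]

lemma ContinuousLinearMap.contDiff_adjoint {n : WithTop ℕ∞} :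
    ContDiff ℝ n (adjoint : (E →L[ℝ] F) → F →L[ℝ] E) :=
  (adjoint : (E →L[ℝ] F) ≃ₗᵢ⋆[ℝ] (F →L[ℝ] E)).toContinuousLinearEquiv.contDiff

lemma ContinuousLinearMap.injective_adjoint {A : E →L[ℝ] F} (hA : Function.Surjective A) :
    Function.Injective (adjoint A) := by
  rw [← coe_coe, ← LinearMap.ker_eq_bot, ← orthogonal_range, LinearMap.range_eq_top.mpr hA,
    Submodule.top_orthogonal_eq_bot]

lemma ContinuousLinearMap.injective_comp_adjoint {A : E →L[ℝ] F} (hA : Function.Surjective A) :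
    Function.Injective (A ∘L adjoint A) :=
  A.self_comp_adjoint_injective_iff.mpr (injective_adjoint hA)

lemma ContinuousLinearMap.isUnit_comp_adjoint [FiniteDimensional ℝ F] {A : E →L[ℝ] F}
    (hA : Function.Surjective A) : IsUnit (A ∘L adjoint A) :=
  isUnit_iff_bijective.mpr ⟨injective_comp_adjoint hA,
    LinearMap.injective_iff_surjective.mp (injective_comp_adjoint hA)⟩

lemma ContinuousLinearMap.surjective_of_isUnit_comp_adjoint {A : E →L[ℝ] F}
    (hA : IsUnit (A ∘L adjoint A)) : Function.Surjective A := fun w ↦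
  ⟨adjoint A (Ring.inverse (A ∘L adjoint A) w), by
    change ((A ∘L adjoint A) * Ring.inverse (A ∘L adjoint A)) w = w
    rw [Ring.mul_inverse_cancel _ hA, one_apply_eq_self]⟩

lemma ContinuousLinearMap.adjoint_ringInverse_comp_adjoint_apply {A : E →L[ℝ] F}
    (hA : IsUnit (A ∘L adjoint A)) {u : E} (hu : u ∈ (adjoint A).range) :
    adjoint A (Ring.inverse (A ∘L adjoint A) (A u)) = u := by
  obtain ⟨μ, rfl⟩ := hu
  change adjoint A ((Ring.inverse (A ∘L adjoint A) * (A ∘L adjoint A)) μ) = adjoint A μ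
  rw [Ring.inverse_mul_cancel _ hA, one_apply_eq_self]

lemma ContinuousLinearMap.adjoint_apply_mem_orthogonal_ker (A : E →L[ℝ] F) (μ : F) :
    adjoint A μ ∈ A.kerᗮ :=
  A.orthogonal_ker ▸ (adjoint A).range.le_topologicalClosure ⟨μ, rfl⟩

lemma IsLocalMinOn.sub_mem_orthogonal_ker {g : E → F} {A : E →L[ℝ] F} {y z : E}
    (hmin : IsLocalMinOn (fun x ↦ ‖z - x‖) {x | g x = g y} y) (hg : HasStrictFDerivAt g A y)
    (hA : Function.Surjective A) : z - y ∈ A.kerᗮ := by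
  have hmin_sq : IsLocalExtrOn (fun x ↦ ‖z - x‖ ^ 2) {x | g x = g y} y :=
    .inl <| hmin.mono fun x hx ↦ pow_le_pow_left₀ (norm_nonneg _) hx 2
  obtain ⟨Λ, Λ₀, hne, hΛ⟩ := hmin_sq.exists_linear_map_of_hasStrictFDerivAt hg
    ((hasStrictFDerivAt_norm_sq (z - y)).comp y ((hasStrictFDerivAt_id y).const_sub z))
  have hΛ₀ : Λ₀ ≠ 0 := by
    rintro rfl
    refine hne (Prod.ext (LinearMap.ext fun w ↦ ?_) rfl)
    obtain ⟨x, rfl⟩ := hA w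
    simpa using hΛ x
  refine (Submodule.mem_orthogonal' _ _).mpr fun w hw ↦ ?_
  simp only [LinearMap.mem_ker, coe_coe] at hw
  simpa [hw, hΛ₀, inner_sub_left, sub_eq_zero] using hΛ w

noncomputable def lagrangeMap (g : E → F) (q : E × F) : E × F :=
  (q.1 + adjoint (fderiv ℝ g q.1) q.2, g q.1)

noncomputable def lagrangeLinearMap (A : E →L[ℝ] F) : E × F →L[ℝ] E × F :=
  (fst ℝ E F + adjoint A ∘L snd ℝ E F).prod (A ∘L fst ℝ E F)

/-- The least-squares solution `μ` of `(dg_y)† μ = z - y`, from the normal equations. -/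
noncomputable def lagrangeMultiplier (g : E → F) (y z : E) : F :=
  Ring.inverse (fderiv ℝ g y ∘L adjoint (fderiv ℝ g y)) (fderiv ℝ g y (z - y))

lemma contDiff_lagrangeMap {g : E → F} {n : WithTop ℕ∞} (hg : ContDiff ℝ (n + 1) g) :
    ContDiff ℝ n (lagrangeMap g) := by
  have hadj : ContDiff ℝ n fun x ↦ adjoint (fderiv ℝ g x) :=
    contDiff_adjoint.comp (hg.fderiv_right le_rfl)
  exact (contDiff_fst.add ((hadj.comp contDiff_fst).clm_apply contDiff_snd)).prodMk
    ((hg.of_le le_self_add).comp contDiff_fst)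

lemma hasFDerivAt_lagrangeMap {g : E → F} {x : E} (hg : ContDiffAt ℝ 2 g x) :
    HasFDerivAt (lagrangeMap g) (lagrangeLinearMap (fderiv ℝ g x)) (x, 0) := by
  have hadj : DifferentiableAt ℝ (fun y ↦ adjoint (fderiv ℝ g y)) x :=
    (contDiff_adjoint (n := 1)).differentiable one_ne_zero _ |>.comp x
      ((hg.fderiv_right (m := 1) le_rfl).differentiableAt one_ne_zero)
  have hsnd : HasFDerivAt (fun q : E × F ↦ q.2) (snd ℝ E F) (x, 0) := hasFDerivAt_snd
  have hfst := (hasFDerivAt_fst (p := (x, (0 : F)))).add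
    ((hadj.hasFDerivAt.comp (x, (0 : F)) hasFDerivAt_fst).clm_apply hsnd)
  refine .prodMk ?_ ((hg.differentiableAt two_ne_zero).hasFDerivAt.comp (x, (0 : F))
    hasFDerivAt_fst)
  convert hfst using 1 <;> ext <;> simp

lemma bijective_lagrangeLinearMap [FiniteDimensional ℝ E] [FiniteDimensional ℝ F]
    {A : E →L[ℝ] F} (hA : Function.Surjective A) : Function.Bijective (lagrangeLinearMap A) := by
  have hinj : Function.Injective (lagrangeLinearMap A) := by
    rw [← coe_coe, ← LinearMap.ker_eq_bot, Submodule.eq_bot_iff]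
    rintro ⟨dx, dμ⟩ h
    simp only [LinearMap.mem_ker, coe_coe, lagrangeLinearMap, prod_apply, add_apply, coe_fst',
      comp_apply, coe_snd', Prod.mk_eq_zero] at h
    obtain ⟨h₁, h₂⟩ := h
    have hdx : dx = 0 := by
      simpa [inner_add_left, adjoint_inner_left, h₂] using congrArg (inner ℝ · dx) h₁
    refine Prod.ext hdx (injective_adjoint hA ?_)
    simpa [hdx] using h₁
  exact ⟨hinj, LinearMap.injective_iff_surjective.mp hinj⟩

@[simp] lemma lagrangeMultiplier_self (g : E → F) (y : E) : lagrangeMultiplier g y y = 0 := by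
  simp [lagrangeMultiplier]

lemma continuousAt_lagrangeMultiplier {g : E → F} {y z : E}
    (hg : ContinuousAt (fderiv ℝ g) y) (hunit : IsUnit (fderiv ℝ g y ∘L adjoint (fderiv ℝ g y))) :
    ContinuousAt (fun q : E × E ↦ lagrangeMultiplier g q.1 q.2) (y, z) := by
  have hg' : ContinuousAt (fun q : E × E ↦ fderiv ℝ g q.1) (y, z) := hg.comp continuousAt_fst
  have hinv : ContinuousAt Ring.inverse (fderiv ℝ g y ∘L adjoint (fderiv ℝ g y)) := by
    simpa using NormedRing.inverse_continuousAt hunit.unit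
  exact (hinv.comp_of_eq (hg'.clm_comp (adjoint.continuous.continuousAt.comp hg'))
    rfl).clm_apply (hg'.clm_apply (continuousAt_snd.sub continuousAt_fst))

lemma lagrangeMap_lagrangeMultiplier [FiniteDimensional ℝ E] {g : E → F} {y z : E}
    (hg : HasStrictFDerivAt g (fderiv ℝ g y) y)
    (hunit : IsUnit (fderiv ℝ g y ∘L adjoint (fderiv ℝ g y)))
    (hmin : IsLocalMinOn (fun x ↦ ‖z - x‖) {x | g x = g y} y) :
    lagrangeMap g (y, lagrangeMultiplier g y z) = (z, g y) := by
  have hnormal := hmin.sub_mem_orthogonal_ker hg (surjective_of_isUnit_comp_adjoint hunit)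
  rw [orthogonal_ker, (Submodule.closed_of_finiteDimensional _).submodule_topologicalClosure_eq]
    at hnormal
  have hμ : adjoint (fderiv ℝ g y) (lagrangeMultiplier g y z) = z - y :=
    adjoint_ringInverse_comp_adjoint_apply hunit hnormal
  simp [lagrangeMap, hμ]

lemma lagrangeMap_symm_fst_eq_of_isLocalMinOn [FiniteDimensional ℝ E] {g : E → F}
    {Φ : OpenPartialHomeomorph (E × F) (E × F)} (hΦ : ⇑Φ = lagrangeMap g) {y z : E}
    (hy : g y = 0) (hg : HasStrictFDerivAt g (fderiv ℝ g y) y)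
    (hunit : IsUnit (fderiv ℝ g y ∘L adjoint (fderiv ℝ g y)))
    (hsource : (y, lagrangeMultiplier g y z) ∈ Φ.source)
    (hmin : IsLocalMinOn (fun x ↦ ‖z - x‖) {x | g x = 0} y) : (Φ.symm (z, 0)).1 = y := by
  have hmap := lagrangeMap_lagrangeMultiplier hg hunit (by rwa [hy])
  rw [hy, ← hΦ] at hmap
  rw [← hmap, Φ.left_inv hsource]

lemma exists_forall_isUnit_and_lagrangeMultiplier_mem [FiniteDimensional ℝ F] {g : E → F}
    {p : E} (hg : ContinuousAt (fderiv ℝ g) p) (hA : Function.Surjective (fderiv ℝ g p))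
    {U : Set (E × F)} (hU : U ∈ 𝓝 (p, 0)) :
    ∃ δ > 0, ∀ y z, ‖y - p‖ < δ → ‖z - p‖ < δ →
      IsUnit (fderiv ℝ g y ∘L adjoint (fderiv ℝ g y)) ∧ (y, lagrangeMultiplier g y z) ∈ U := by
  have hunit : ∀ᶠ y in 𝓝 p, IsUnit (fderiv ℝ g y ∘L adjoint (fderiv ℝ g y)) :=
    (hg.clm_comp (adjoint.continuous.continuousAt.comp hg)).eventually_mem
      (Units.isOpen.mem_nhds (isUnit_comp_adjoint hA))
  have hmem : ∀ᶠ q in 𝓝 (p, p), (q.1, lagrangeMultiplier g q.1 q.2) ∈ U :=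
    (continuousAt_fst.prodMk (continuousAt_lagrangeMultiplier hg (isUnit_comp_adjoint hA)))
      |>.eventually_mem (by simpa using hU)
  obtain ⟨δ, hδ, h⟩ := Metric.eventually_nhds_iff.mp ((continuousAt_fst.eventually hunit).and hmem)
  refine ⟨δ, hδ, fun y z hy hz ↦ @h (y, z) ?_⟩
  rw [Prod.dist_eq, dist_eq_norm, dist_eq_norm]
  exact max_lt hy hz

lemma deriv_eq_and_deriv_deriv_mem_orthogonal_ker {A : E →L[ℝ] F} (hA : Function.Surjective A)
    {a : ℝ → E} {K : ℝ → F →L[ℝ] E} {b : ℝ → F} {p v : E}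
    (hK : ContDiffAt ℝ 2 K 0) (hb : ContDiffAt ℝ 2 b 0) (hK₀ : K 0 = adjoint A) (hb₀ : b 0 = 0)
    (hcurve : ∀ᶠ t in 𝓝 0, a t + K t (b t) = p + t • v) (hv : A v = 0)
    (htangent : A (deriv a 0) = 0) :
    deriv a 0 = v ∧ deriv (deriv a) 0 ∈ A.kerᗮ := by
  have hX : ∀ᶠ t in 𝓝 0, DifferentiableAt ℝ (fun s ↦ K s (b s)) t := by
    filter_upwards [hK.eventually (by simp), hb.eventually (by simp)] with t hKt hbt
    exact (hKt.differentiableAt two_ne_zero).clm_apply (hbt.differentiableAt two_ne_zero)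
  have hda : deriv a =ᶠ[𝓝 0] fun t ↦ v - deriv (fun s ↦ K s (b s)) t := by
    filter_upwards [hcurve.eventually_nhds, hX] with t ht hXt
    have ha : a =ᶠ[𝓝 t] fun s ↦ (p + s • v) - K s (b s) := ht.mono fun s hs ↦ eq_sub_of_add_eq hs
    rw [ha.deriv_eq, deriv_fun_sub (by fun_prop) hXt]
    simp [deriv_smul_const]
  have hda₀ : deriv a 0 = v - adjoint A (deriv b 0) := by
    rw [hda.eq_of_nhds, deriv_clm_apply_of_eq_zero (hK.differentiableAt two_ne_zero)
      (hb.differentiableAt two_ne_zero) hb₀, hK₀]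
  have hb₁ : deriv b 0 = 0 := injective_comp_adjoint hA (by simpa [hda₀, hv] using htangent)
  refine ⟨by rw [hda₀, hb₁, map_zero, sub_zero], ?_⟩
  rw [hda.deriv_eq, deriv_const_sub, deriv_deriv_clm_apply_of_eq_zero hK hb hb₀ hb₁, hK₀]
  exact neg_mem (adjoint_apply_mem_orthogonal_ker A _)

lemma deriv_fst_symm_line_eq_and_mem_orthogonal_ker {g : E → F} (hg : ContDiff ℝ 3 g)
    {p v : E} (hA : Function.Surjective (fderiv ℝ g p)) (hv : fderiv ℝ g p v = 0)
    {Φ : OpenPartialHomeomorph (E × F) (E × F)} (hΦ : ⇑Φ = lagrangeMap g)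
    (htarget : (p, 0) ∈ Φ.target) (hfix : Φ.symm (p, 0) = (p, 0))
    (hsymm : ContDiffAt ℝ 2 Φ.symm (p, 0)) :
    deriv (fun t : ℝ ↦ (Φ.symm (p + t • v, 0)).1) 0 = v ∧
      deriv (deriv fun t : ℝ ↦ (Φ.symm (p + t • v, 0)).1) 0 ∈ (fderiv ℝ g p).kerᗮ := by
  set ψ : ℝ → E × F := fun t ↦ Φ.symm (p + t • v, 0)
  have hψ : ContDiffAt ℝ 2 ψ 0 :=
    ContDiffAt.comp (f := fun t : ℝ ↦ (p + t • v, (0 : F))) 0 (by simpa using hsymm) (by fun_prop)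
  have hlagrange : ∀ᶠ t in 𝓝 0, lagrangeMap g (ψ t) = (p + t • v, 0) := by
    have hline : Continuous fun t : ℝ ↦ (p + t • v, (0 : F)) := by fun_prop
    filter_upwards [hline.continuousAt.eventually_mem
      (Φ.open_target.mem_nhds (by simpa using htarget))] with t ht
    exact hΦ ▸ Φ.right_inv ht
  have ha : ContDiffAt ℝ 2 (fun t ↦ (ψ t).1) 0 := contDiffAt_fst.comp 0 hψ
  have hψ₀ : ψ 0 = (p, 0) := by simpa [ψ] using hfix
  have htangent : fderiv ℝ g p (deriv (fun t ↦ (ψ t).1) 0) = 0 := by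
    have hchain := (hg.differentiable (by norm_num) (ψ 0).1).hasFDerivAt.comp_hasDerivAt 0
      (ha.differentiableAt two_ne_zero).hasDerivAt
    rw [hψ₀] at hchain
    refine hchain.unique ((hasDerivAt_const 0 (0 : F)).congr_of_eventuallyEq ?_)
    filter_upwards [hlagrange] with t ht using congrArg Prod.snd ht
  refine deriv_eq_and_deriv_deriv_mem_orthogonal_ker hA
    (K := fun t ↦ adjoint (fderiv ℝ g (ψ t).1)) (b := fun t ↦ (ψ t).2) ?_
    (contDiffAt_snd.comp 0 hψ) (by simp [hψ₀]) (by simp [hψ₀])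
    (hlagrange.mono fun t ht ↦ congrArg Prod.fst ht) hv htangent
  exact contDiff_adjoint.contDiffAt.comp 0
    ((hg.fderiv_right (m := 2) (by norm_num)).contDiffAt.comp 0 ha)

end Lagrange

/-- **Euclidean distance retraction** (Theorem 2.2 / `AbsMal2012`).
Let `g : ℝⁿ → ℝᵐ` be smooth, `M = g⁻¹(0)`, and `p ∈ M` a point where `dg_p` is
surjective.  Then there is a locally defined smooth map `R_p` on a small ball of the
tangent space `T_pM = ker dg_p` which sends `v` to the unique local Euclidean-closest
point of `M` to `p + v`; it satisfies `R_p 0 = p`, the first-order retraction property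
`(d/dt) R_p(tv)|₀ = v`, and the second-order property
`(d²/dt²) R_p(tv)|₀ ∈ N_pM = (T_pM)ᗮ`. -/
theorem euclidean_distance_retraction_exists
    (n m : ℕ) (g : EuclideanSpace ℝ (Fin n) → EuclideanSpace ℝ (Fin m))
    (hg : ContDiff ℝ (⊤ : ℕ∞) g)
    (p : EuclideanSpace ℝ (Fin n)) (hp : g p = 0)
    (hsurj : Function.Surjective (fderiv ℝ g p)) :
    ∃ ε > (0:ℝ), ∃ δ > (0:ℝ),
      ∃ R : EuclideanSpace ℝ (Fin n) → EuclideanSpace ℝ (Fin n),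
        ContDiffOn ℝ (⊤ : ℕ∞) R
          {v | v ∈ LinearMap.ker (fderiv ℝ g p : EuclideanSpace ℝ (Fin n) →ₗ[ℝ] EuclideanSpace ℝ (Fin m)) ∧ ‖v‖ < ε} ∧
        R 0 = p ∧
        ∀ v ∈ LinearMap.ker (fderiv ℝ g p : EuclideanSpace ℝ (Fin n) →ₗ[ℝ] EuclideanSpace ℝ (Fin m)), ‖v‖ < ε →
          -- (i) `R v` is the unique local Euclidean-closest point of `M` to `p + v`
          (g (R v) = 0 ∧
            (∀ y, g y = 0 → ‖y - p‖ < δ →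
              ‖p + v - R v‖ ≤ ‖p + v - y‖ ∧
              (‖p + v - R v‖ = ‖p + v - y‖ → y = R v)) ∧
          -- (iii) first-order retraction property: `c'(0) = v` for `c t = R (t • v)`
            deriv (fun t : ℝ => R (t • v)) 0 = v ∧
          -- (iv) second-order retraction property: `c''(0) ∈ N_pM`
            deriv (deriv (fun t : ℝ => R (t • v))) 0 ∈
              (LinearMap.ker (fderiv ℝ g p : EuclideanSpace ℝ (Fin n) →ₗ[ℝ] EuclideanSpace ℝ (Fin m)))ᗮ) := by
  have hg3 : ContDiff ℝ 3 g := contDiff_infty.mp hg 3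
  obtain ⟨Φ, hΦ, hsource, hsymm⟩ :=
    (contDiff_lagrangeMap (n := ∞) hg).exists_openPartialHomeomorph_contDiffAt_symm
      (by simp) (hasFDerivAt_lagrangeMap (hg3.contDiffAt.of_le (by norm_num)))
      (bijective_lagrangeLinearMap hsurj)
  have hfix : Φ (p, 0) = (p, 0) := by simp [hΦ, lagrangeMap, hp]
  have htarget : (p, 0) ∈ Φ.target := hfix ▸ Φ.map_source hsource
  have hfix_symm : Φ.symm (p, 0) = (p, 0) := by simpa [hfix] using Φ.left_inv hsource
  obtain ⟨δ, hδ, hnear⟩ := exists_forall_isUnit_and_lagrangeMultiplier_mem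
    (hg.continuous_fderiv (by simp)).continuousAt hsurj (Φ.open_source.mem_nhds hsource)
  obtain ⟨r, hr, hball⟩ := Metric.isOpen_iff.mp Φ.open_target _ htarget
  refine ⟨min (δ / 2) r, by positivity, δ, hδ, fun v ↦ (Φ.symm (p + v, 0)).1, ?_, ?_, ?_⟩
  · rintro v ⟨-, hv⟩
    have hvr : (p + v, (0 : EuclideanSpace ℝ (Fin m))) ∈ Metric.ball (p, 0) r := by
      simpa [Prod.dist_eq, dist_eq_norm, hr] using hv.trans_le (min_le_right _ _)
    exact (contDiffAt_fst.comp v ((hsymm _ (hball hvr)).comp v (by fun_prop))).contDiffWithinAt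
  · simp [hfix_symm]
  intro v hv hvε
  have hz : ‖p + v - p‖ < δ / 2 := by
    rw [add_sub_cancel_left]; exact hvε.trans_le (min_le_left _ _)
  obtain ⟨hM, hnearest⟩ :=
    (isClosed_eq hg.continuous continuous_const).unique_nearest_of_unique_isLocalMinOn
      (z := p + v) (δ := δ) hp (by linarith) fun y hy hyδ hmin ↦ by
        obtain ⟨hunit, hsource'⟩ := hnear y (p + v) hyδ (by linarith)
        exact (lagrangeMap_symm_fst_eq_of_isLocalMinOn hΦ hy
          (hg.contDiffAt.hasStrictFDerivAt (by simp)) hunit hsource' hmin).symm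
  exact ⟨hM, hnearest, deriv_fst_symm_line_eq_and_mem_orthogonal_ker hg3 hsurj hv hΦ htarget
    hfix_symm (contDiffAt_infty.mp (hsymm _ htarget) 2)⟩
end

section
/- Let B be a real m×n matrix with rank m (m ≤ n), and let A be a real symmetric n×n matrix whose operator norm satisfies ‖A‖ < 1. Then the (m+n)×(m+n) block matrix with block rows [B, 0] and [I_n + A, Bᵀ] (where I_n is the n×n identity and 0 is the m×m zero block) is invertible. -/
/-!
Write `v = (x, y)`. If the block matrix kills `v`, then `B x = 0` and `(1 + A) x + Bᵀ y = 0`;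
pairing the second equation with `x` kills the `Bᵀ y` term, because `x ⬝ᵥ Bᵀ y = B x ⬝ᵥ y = 0`,
and leaves `x ⬝ᵥ (1 + A) x = 0`. Since `|x ⬝ᵥ A x| ≤ ‖A‖ ‖x‖²` with `‖A‖ < 1`, this forces `x = 0`,
and then `Bᵀ y = 0` forces `y = 0` because `Bᵀ` has full column rank. An injective linear map
between spaces of the same dimension `n + m` is bijective.
-/

open Matrix

namespace Matrix

variable {m n : Type*} [Fintype n]

theorem mulVec_injective_of_rank_eq_card {K : Type*} [Field K] (B : Matrix m n K)
    (hB : B.rank = Fintype.card n) : Function.Injective B.mulVec := by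
  have h := LinearMap.finrank_range_add_finrank_ker B.mulVecLin
  rw [← rank, hB, Module.finrank_fintype_fun_eq_card, add_eq_left, Submodule.finrank_eq_zero,
    LinearMap.ker_eq_bot] at h
  exact h

theorem fromBlocks_zero₁₂_mulVec_injective [Fintype m] {R : Type*} [CommRing R]
    (B : Matrix m n R) (C : Matrix n n R) (hBt : Function.Injective Bᵀ.mulVec)
    (hC : ∀ x ≠ 0, B *ᵥ x = 0 → x ⬝ᵥ C *ᵥ x ≠ 0) :
    Function.Injective (fromBlocks B 0 C Bᵀ).mulVec := by
  refine (injective_iff_map_eq_zero (fromBlocks B 0 C Bᵀ).mulVecLin).2 fun v hv => ?_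
  obtain ⟨x, y, rfl⟩ : ∃ x y, v = Sum.elim x y := ⟨v ∘ Sum.inl, v ∘ Sum.inr, by simp⟩
  simp only [mulVecLin_apply, fromBlocks_mulVec, Sum.elim_comp_inl, Sum.elim_comp_inr,
    zero_mulVec, add_zero, ← Sum.elim_zero_zero, Sum.elim_eq_iff] at hv
  obtain ⟨hBx, hCxy⟩ := hv
  have hx : x = 0 := by
    by_contra hx
    apply hC x hx hBx
    calc x ⬝ᵥ C *ᵥ x = x ⬝ᵥ (C *ᵥ x + Bᵀ *ᵥ y) := by
          rw [dotProduct_add, dotProduct_mulVec x Bᵀ, vecMul_transpose, hBx, zero_dotProduct,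
            add_zero]
      _ = 0 := by rw [hCxy, dotProduct_zero]
  have hy : y = 0 := hBt (by simpa [hx] using hCxy)
  rw [hx, hy, Sum.elim_zero_zero]

variable [DecidableEq n]

theorem abs_dotProduct_mulVec_self_le (A : Matrix n n ℝ) (x : n → ℝ) :
    |x ⬝ᵥ A *ᵥ x| ≤ ‖toEuclideanCLM (𝕜 := ℝ) A‖ * (x ⬝ᵥ x) := by
  set T := toEuclideanCLM (𝕜 := ℝ) A
  set x' := WithLp.toLp 2 x
  have hnorm : ‖x'‖ ^ 2 = x ⬝ᵥ x := by
    rw [← real_inner_self_eq_norm_sq, EuclideanSpace.inner_toLp_toLp, star_trivial]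
  calc |x ⬝ᵥ A *ᵥ x| = |inner ℝ x' (T x')| := by rw [inner_toEuclideanCLM]
    _ ≤ ‖x'‖ * ‖T x'‖ := abs_real_inner_le_norm _ _
    _ ≤ ‖x'‖ * (‖T‖ * ‖x'‖) := by gcongr; exact T.le_opNorm x'
    _ = ‖T‖ * (x ⬝ᵥ x) := by rw [← hnorm]; ring

theorem dotProduct_one_add_mulVec_self_pos {A : Matrix n n ℝ}
    (hA : ‖toEuclideanCLM (𝕜 := ℝ) A‖ < 1) {x : n → ℝ} (hx : x ≠ 0) :
    0 < x ⬝ᵥ (1 + A) *ᵥ x := by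
  have hxx : 0 < x ⬝ᵥ x := dotProduct_self_star_pos_iff.2 hx
  have hAx := neg_le_of_abs_le (abs_dotProduct_mulVec_self_le A x)
  rw [add_mulVec, one_mulVec, dotProduct_add]
  nlinarith

end Matrix

theorem block_jacobian_invertible_general
    (m n : ℕ) (B : Matrix (Fin m) (Fin n) ℝ) (hB : B.rank = m)
    (A : Matrix (Fin n) (Fin n) ℝ)
    (hnorm : ‖Matrix.toEuclideanCLM (𝕜 := ℝ) A‖ < 1) :
    Function.Bijective
      (Matrix.mulVecLin
        (Matrix.fromBlocks B (0 : Matrix (Fin m) (Fin m) ℝ) (1 + A) Bᵀ)) := by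
  have hBt : Function.Injective Bᵀ.mulVec :=
    Bᵀ.mulVec_injective_of_rank_eq_card (by rw [rank_transpose, hB, Fintype.card_fin])
  have hinj : Function.Injective (fromBlocks B 0 (1 + A) Bᵀ).mulVecLin :=
    fromBlocks_zero₁₂_mulVec_injective B (1 + A) hBt fun _ hx _ =>
      (dotProduct_one_add_mulVec_self_pos hnorm hx).ne'
  have hdim : Module.finrank ℝ (Fin n ⊕ Fin m → ℝ) = Module.finrank ℝ (Fin m ⊕ Fin n → ℝ) := by
    simp [add_comm]
  exact ⟨hinj, (LinearMap.injective_iff_surjective_of_finrank_eq_finrank hdim).1 hinj⟩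

open Matrix in
/-- Block-matrix invertibility underlying Lemma 2.5: if `B` is an `m × n` real matrix of
rank `m` and `A` is a symmetric `n × n` real matrix of (ℓ²-)operator norm `< 1`, then the
block matrix `[[B, 0], [Iₙ + A, Bᵀ]]` is invertible (its associated linear map
`ℝⁿ × ℝᵐ → ℝᵐ × ℝⁿ` is bijective). -/
theorem block_jacobian_invertible
    (m n : ℕ) (B : Matrix (Fin m) (Fin n) ℝ) (hB : B.rank = m)
    (A : Matrix (Fin n) (Fin n) ℝ) (hA : A.IsSymm)
    (hnorm : ‖Matrix.toEuclideanCLM (𝕜 := ℝ) A‖ < 1) :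
    Function.Bijective
      (Matrix.mulVecLin
        (Matrix.fromBlocks B (0 : Matrix (Fin m) (Fin m) ℝ) (1 + A) Bᵀ)) :=
  block_jacobian_invertible_general m n B hB A hnorm
end
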